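/- arXiv:2408.01906 — 3 statements merged into one kernel-verified Lean document; each statement's English description precedes it below -/
import Mathlib

section
/- Let m ≥ 2 and n = 2^m − 1, and let a be an odd integer with 1 ≤ a ≤ n − 1 such that l_a = m (i.e., the 2-cyclotomic coset C_a of a modulo n has exactly m elements). Then the number of even integers in C_a equals m − wt_2(a), and the number of even integers in C_{n−a} equals wt_2(a). -/
open Polynomial

noncomputable def wt2 (a : ℕ) : ℕ := (Nat.digits 2 a).sum

noncomputable def ell (m i : ℕ) : ℕ :=
  sInf {l : ℕ | 0 < l ∧ i * 2 ^ l % (2 ^ m - 1) = i % (2 ^ m - 1)}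

noncomputable def coset (m i : ℕ) : Finset ℕ :=
  (Finset.range (ell m i)).image (fun j => i * 2 ^ j % (2 ^ m - 1))

noncomputable def rho (m i : ℕ) : ℕ := ((coset m i).filter (fun x => x % 2 = 0)).card

noncomputable def vv (m i : ℕ) : ℕ := m * rho m i / ell m i % 2

noncomputable def Tset (m j : ℕ) : Finset ℕ :=
  (Finset.range (2 ^ m - 1)).filter (fun i => vv m i = j)

noncomputable def Nset (m j : ℕ) : Finset ℕ :=
  (Finset.range (2 ^ m - 1)).filter (fun a => a ≠ 0 ∧ wt2 a % 2 = j)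

noncomputable def epsilon (h a : ℕ) : ℕ :=
  if a = 2 ^ h - 1 then 1 else sInf {t : ℕ | 2 ^ h - 1 ≤ 2 ^ t * a}

noncomputable def kappa (h a : ℕ) : ℕ := epsilon h a % 2

noncomputable def leader (m i : ℕ) : ℕ := sInf {x : ℕ | x ∈ coset m i}

noncomputable def uu (m h i : ℕ) : ℕ :=
  if leader m i = 1 then (vv m 1 + h + 1) % 2
  else if leader m i % 2 = 1 ∧ leader m i ≤ 2 ^ h - 1 then
    (kappa h (leader m i) + vv m (leader m i)) % 2
  else vv m (leader m i)

noncomputable def Dset (m h j : ℕ) : Finset ℕ :=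
  (Finset.range (2 ^ m - 1)).filter (fun i => uu m h i = j)

noncomputable def cyclicCode (m : ℕ) (α : GaloisField 2 m) (T : Set ℕ) :
    Submodule (ZMod 2) (Polynomial (ZMod 2)) :=
  Polynomial.degreeLT (ZMod 2) (2 ^ m - 1) ⊓
    ⨅ j ∈ T, LinearMap.ker (Polynomial.aeval (α ^ j)).toLinearMap

def minDistGE (C : Submodule (ZMod 2) (Polynomial (ZMod 2))) (d : ℕ) : Prop :=
  ∀ c ∈ C, c ≠ 0 → d ≤ c.support.card

/-!
Multiplication by `2` modulo `2 ^ m - 1` rotates the `m`-bit binary expansion cyclically, so the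
parity of `a * 2 ^ (m - i) mod (2 ^ m - 1)` is the `i`-th bit of `a`. When `l_a = m` the elements
`a * 2 ^ j`, `j < m`, of `C_a` are distinct, so the even ones correspond to the zero bits of `a`.
The number `2 ^ m - 1 - a` is the bitwise complement of `a` and has the same coset length, which
gives the second count.
-/

open Finset

lemma wt2_eq_card_testBit {m a : ℕ} (h : a < 2 ^ m) :
    wt2 a = #{i ∈ range m | a.testBit i} := by
  induction m generalizing a with
  | zero =>
    obtain rfl : a = 0 := by simpa using h
    simp [wt2]
  | succ m ih =>
    rcases eq_or_ne a 0 with rfl | ha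
    · simp [wt2]
    have hdigits : wt2 a = a % 2 + wt2 (a / 2) := by
      simp [wt2, Nat.digits_eq_cons_digits_div one_lt_two ha]
    rw [hdigits, ih (by omega), card_filter, card_filter, sum_range_succ']
    simp only [Nat.testBit_add_one, Nat.testBit_zero]
    rcases Nat.mod_two_eq_zero_or_one a with h2 | h2 <;> simp [h2, add_comm]

lemma wt2_le {m a : ℕ} (h : a < 2 ^ m) : wt2 a ≤ m := by
  rw [wt2_eq_card_testBit h]
  exact (card_filter_le _ _).trans (card_range m).le

lemma wt2_two_pow_sub_one_sub {m a : ℕ} (h : a < 2 ^ m) :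
    wt2 (2 ^ m - 1 - a) = m - wt2 a := by
  have hcompl : ∀ i ∈ range m, (2 ^ m - 1 - a).testBit i ↔ ¬ a.testBit i := by
    intro i hi
    rw [Nat.sub_sub, add_comm, Nat.testBit_two_pow_sub_succ h]
    simp [mem_range.mp hi]
  have hsplit := card_filter_add_card_filter_not (s := range m) (fun i => a.testBit i)
  rw [card_range] at hsplit
  rw [wt2_eq_card_testBit (m := m) (by omega), wt2_eq_card_testBit h, filter_congr hcompl]
  omega

lemma two_pow_modEq_one (m : ℕ) : 2 ^ m ≡ 1 [MOD 2 ^ m - 1] :=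
  Nat.modEq_sub Nat.one_le_two_pow

lemma periodic_mul_two_pow_mod (m a : ℕ) :
    Function.Periodic (fun j => a * 2 ^ j % (2 ^ m - 1)) m := fun j => by
  show a * 2 ^ (j + m) ≡ a * 2 ^ j [MOD 2 ^ m - 1]
  simpa [pow_add, ← mul_assoc] using (two_pow_modEq_one m).mul_left (a * 2 ^ j)

lemma mul_two_pow_sub_mod {m a i : ℕ} (ha : a < 2 ^ m - 1) (hi : i ≤ m) :
    a * 2 ^ (m - i) % (2 ^ m - 1) = a / 2 ^ i + a % 2 ^ i * 2 ^ (m - i) := by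
  have hdecomp := Nat.div_add_mod a (2 ^ i)
  have hr : a % 2 ^ i < 2 ^ i := Nat.mod_lt _ (by positivity)
  have hpow : 2 ^ i * 2 ^ (m - i) = 2 ^ m := by rw [← pow_add, Nat.add_sub_cancel' hi]
  have hB : 0 < 2 ^ (m - i) := by positivity
  generalize a / 2 ^ i = q at *
  generalize a % 2 ^ i = r at *
  generalize (2 : ℕ) ^ i = A at *
  generalize (2 : ℕ) ^ (m - i) = B at *
  subst hdecomp
  rw [← hpow] at ha ⊢
  have hA : 0 < A := by omega
  have hbound : q + r * B + 2 ≤ A * B := by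
    have ha' : A * q + r + 2 ≤ A * B := by omega
    rcases Nat.lt_or_ge (r + 1) A with h | h
    · have hq : q < B := Nat.lt_of_mul_lt_mul_left (a := A) (by omega)
      have : (r + 2) * B ≤ A * B := Nat.mul_le_mul_right B h
      nlinarith
    · obtain rfl : A = r + 1 := by omega
      have hq : q + 1 < B := Nat.lt_of_mul_lt_mul_left (a := r + 1) (by nlinarith)
      nlinarith
  have hsplit : (A * q + r) * B = (A * B - 1) * q + (q + r * B) := by
    zify [show 1 ≤ A * B by nlinarith]
    ring
  rw [hsplit, Nat.mul_add_mod, Nat.mod_eq_of_lt (by omega)]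

lemma mul_two_pow_sub_mod_two {m a i : ℕ} (ha : a < 2 ^ m - 1) (hi : i < m) :
    a * 2 ^ (m - i) % (2 ^ m - 1) % 2 = a / 2 ^ i % 2 := by
  have heven : 2 ∣ a % 2 ^ i * 2 ^ (m - i) := dvd_mul_of_dvd_right (dvd_pow_self 2 (by omega)) _
  rw [mul_two_pow_sub_mod ha hi.le]
  omega

lemma ell_le {m a l : ℕ} (hl : 0 < l) (h : a * 2 ^ l ≡ a [MOD 2 ^ m - 1]) : ell m a ≤ l :=
  Nat.sInf_le ⟨hl, h⟩

lemma mul_two_pow_ell_modEq {m a : ℕ} (h : 0 < ell m a) :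
    a * 2 ^ ell m a ≡ a [MOD 2 ^ m - 1] :=
  (Nat.sInf_mem (Nat.nonempty_of_pos_sInf h)).2

lemma injOn_mul_two_pow_mod (m a : ℕ) :
    Set.InjOn (fun j => a * 2 ^ j % (2 ^ m - 1)) (range (ell m a)) := by
  have key : ∀ i j, i < j → j < ell m a → ¬ a * 2 ^ i ≡ a * 2 ^ j [MOD 2 ^ m - 1] := by
    intro i j hij hj hmod
    have hcycle : a * 2 ^ (i + (ell m a - j)) ≡ a [MOD 2 ^ m - 1] :=
      calc a * 2 ^ (i + (ell m a - j)) = a * 2 ^ i * 2 ^ (ell m a - j) := by ring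
        _ ≡ a * 2 ^ j * 2 ^ (ell m a - j) [MOD 2 ^ m - 1] := hmod.mul_right _
        _ = a * 2 ^ ell m a := by rw [mul_assoc, ← pow_add, Nat.add_sub_cancel' hj.le]
        _ ≡ a [MOD 2 ^ m - 1] := mul_two_pow_ell_modEq (by omega)
    have := ell_le (by omega) hcycle
    omega
  intro i hi j hj hij
  rw [coe_range, Set.mem_Iio] at hi hj
  rcases lt_trichotomy i j with h | h | h
  · exact absurd hij (key i j h hj)
  · exact h
  · exact absurd hij.symm (key j i h hi)

lemma ell_two_pow_sub_one_sub {m a : ℕ} (ha : a ≤ 2 ^ m - 1) :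
    ell m (2 ^ m - 1 - a) = ell m a := by
  have hneg : ((2 ^ m - 1 - a : ℕ) : ZMod (2 ^ m - 1)) = -a := by
    rw [Nat.cast_sub ha, ZMod.natCast_self, zero_sub]
  unfold ell
  congr 1
  ext l
  refine and_congr_right fun _ => ?_
  change _ ≡ _ [MOD _] ↔ _ ≡ _ [MOD _]
  simp only [← ZMod.natCast_eq_natCast_iff, Nat.cast_mul, Nat.cast_pow, hneg, neg_mul, neg_inj]

lemma card_filter_range_sub_mod (m : ℕ) (p : ℕ → Prop) [DecidablePred p] :
    #{i ∈ range m | p ((m - i) % m)} = #{i ∈ range m | p i} := by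
  have hinvol : ∀ i < m, (m - (m - i) % m) % m = i := by
    intro i hi
    rcases Nat.eq_zero_or_pos i with rfl | hi0
    · simp
    · rw [Nat.mod_eq_of_lt (by omega : m - i < m), Nat.sub_sub_self hi.le, Nat.mod_eq_of_lt hi]
  refine card_nbij' (fun i => (m - i) % m) (fun i => (m - i) % m) ?_ ?_ ?_ ?_
  all_goals
    intro i hi
    simp only [coe_filter, mem_range, Set.mem_ofPred_eq] at hi ⊢
  · exact ⟨Nat.mod_lt _ (by omega), hi.2⟩
  · exact ⟨Nat.mod_lt _ (by omega), by rw [hinvol i hi.1]; exact hi.2⟩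
  · exact hinvol i hi.1
  · exact hinvol i hi.1

lemma rho_eq_sub_wt2 {m a : ℕ} (ha : a < 2 ^ m - 1) (hla : ell m a = m) :
    rho m a = m - wt2 a := by
  set f := fun j => a * 2 ^ j % (2 ^ m - 1)
  have hbit : ∀ i ∈ range m, f ((m - i) % m) % 2 = 0 ↔ ¬ a.testBit i := by
    intro i hi
    rw [show f ((m - i) % m) = f (m - i) from (periodic_mul_two_pow_mod m a).map_mod_nat _]
    change a * 2 ^ (m - i) % (2 ^ m - 1) % 2 = 0 ↔ _
    rw [mul_two_pow_sub_mod_two ha (mem_range.mp hi), Nat.testBit_eq_decide_div_mod_eq]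
    simp
  have hinj : Set.InjOn f (range m) := hla ▸ injOn_mul_two_pow_mod m a
  calc rho m a = #{j ∈ range m | f j % 2 = 0} := by
        rw [rho, coset, hla, filter_image,
          card_image_of_injOn (hinj.mono (coe_subset.2 (filter_subset _ _)))]
    _ = #{i ∈ range m | ¬ a.testBit i} := by
        rw [← card_filter_range_sub_mod, filter_congr hbit]
    _ = m - wt2 a := by
        have hsplit := card_filter_add_card_filter_not (s := range m) (fun i => a.testBit i)
        rw [card_range] at hsplit
        rw [wt2_eq_card_testBit (by omega : a < 2 ^ m)]
        omega

theorem stmt0_general (m a : ℕ) (ha2 : 1 ≤ a)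
    (ha3 : a ≤ 2 ^ m - 1 - 1) (hla : ell m a = m) :
    rho m a = m - wt2 a ∧ rho m (2 ^ m - 1 - a) = wt2 a := by
  have ha : a < 2 ^ m - 1 := by omega
  have hwt : wt2 a ≤ m := wt2_le (by omega)
  refine ⟨rho_eq_sub_wt2 ha hla, ?_⟩
  rw [rho_eq_sub_wt2 (by omega) (by rw [ell_two_pow_sub_one_sub ha.le, hla]),
    wt2_two_pow_sub_one_sub (by omega)]
  omega

theorem stmt0 (m a : ℕ) (hm : 2 ≤ m) (ha1 : a % 2 = 1) (ha2 : 1 ≤ a)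
    (ha3 : a ≤ 2 ^ m - 1 - 1) (hla : ell m a = m) :
    rho m a = m - wt2 a ∧ rho m (2 ^ m - 1 - a) = wt2 a :=
  stmt0_general m a ha2 ha3 hla
end

section
/- Let m ≥ 2, n = 2^m − 1, and let a be an integer with gcd(a, n) = 1. Let j be an odd integer with 1 ≤ j ≤ 2^{m/2} if m is even, and with 1 ≤ j ≤ 2^{(m+1)/2} − 1 if m is odd, and set b = a·j mod n. Then l_b = m, i.e., the 2-cyclotomic coset of b modulo n has exactly m elements. -/
open Polynomial

/-! The length of the coset of `b = a j mod n` is the multiplicative order `ω` of 2 modulo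
`d = n / gcd(n, b) = n / gcd(n, j)`, and `ω ∣ m` because `d ∣ 2^m - 1`. If `ω` were a proper
divisor of `m`, then `ω ≤ ⌊m/2⌋` and `d ≤ 2^ω - 1`, so `n = gcd(n, j) · d ≤ j (2^⌊m/2⌋ - 1)`,
which the bound on `j` makes smaller than `n`. -/

theorem orderOf_eq_sInf_pow_eq_one {G : Type*} [Monoid G] (x : G) :
    orderOf x = sInf {l | 0 < l ∧ x ^ l = 1} := by
  simp only [orderOf, Function.minimalPeriod_eq_sInf_n_pos_IsPeriodicPt,
    isPeriodicPt_mul_iff_pow_eq_one]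

theorem Nat.mul_modEq_mul_left_iff_div_gcd {n a b c : ℕ} (hn : 0 < n) :
    c * a ≡ c * b [MOD n] ↔ a ≡ b [MOD n / n.gcd c] := by
  refine ⟨Nat.ModEq.cancel_left_div_gcd hn, fun h => ?_⟩
  have hc : c = c / n.gcd c * n.gcd c := (Nat.div_mul_cancel (Nat.gcd_dvd_right n c)).symm
  have hg : n.gcd c * (n / n.gcd c) = n := Nat.mul_div_cancel' (Nat.gcd_dvd_left n c)
  rw [hc, mul_assoc, mul_assoc]
  have h' := h.mul_left' (n.gcd c)
  rw [hg] at h'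
  exact h'.mul_left _

theorem ZMod.natCast_pow_eq_one_iff {d q l : ℕ} : (q : ZMod d) ^ l = 1 ↔ q ^ l ≡ 1 [MOD d] := by
  rw [← ZMod.natCast_eq_natCast_iff]
  push_cast
  rfl

theorem orderOf_dvd_of_dvd_pow_sub_one {d q m : ℕ} (hq : 0 < q) (h : d ∣ q ^ m - 1) :
    orderOf (q : ZMod d) ∣ m :=
  orderOf_dvd_of_pow_eq_one <| ZMod.natCast_pow_eq_one_iff.mpr
    ((Nat.modEq_iff_dvd' (Nat.pow_pos hq)).mpr h).symm

theorem le_pow_orderOf_sub_one {d q : ℕ} (hq : 2 ≤ q) (hω : 0 < orderOf (q : ZMod d)) :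
    d ≤ q ^ orderOf (q : ZMod d) - 1 := by
  have hlt : 1 < q ^ orderOf (q : ZMod d) := Nat.one_lt_pow hω.ne' hq
  refine Nat.le_of_dvd (by omega) ((Nat.modEq_iff_dvd' hlt.le).mp ?_)
  exact (ZMod.natCast_pow_eq_one_iff.mp (pow_orderOf_eq_one _)).symm

theorem ell_eq_orderOf {m : ℕ} (hm : 0 < m) (i : ℕ) :
    ell m i = orderOf (2 : ZMod ((2 ^ m - 1) / (2 ^ m - 1).gcd i)) := by
  have hn : 0 < 2 ^ m - 1 := Nat.sub_pos_of_lt (Nat.one_lt_two_pow hm.ne')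
  rw [orderOf_eq_sInf_pow_eq_one, ell]
  congr 1
  ext l
  have key := (Nat.mul_modEq_mul_left_iff_div_gcd (a := 2 ^ l) (b := 1) (c := i) hn).trans
    ZMod.natCast_pow_eq_one_iff.symm
  rw [mul_one] at key
  exact and_congr_right fun _ => by exact_mod_cast key

theorem mul_two_pow_half_sub_one_lt {m j : ℕ} (hm : 2 ≤ m)
    (hje : Even m → j ≤ 2 ^ (m / 2)) (hjo : Odd m → j ≤ 2 ^ ((m + 1) / 2) - 1) :
    j * (2 ^ (m / 2) - 1) < 2 ^ m - 1 := by
  rcases Nat.even_or_odd' m with ⟨h, rfl | rfl⟩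
  · have hj : j ≤ 2 ^ h := by simpa using hje (even_two_mul h)
    have hP : 2 ≤ 2 ^ h := Nat.le_self_pow (by omega) 2
    have hsq : 2 ^ (2 * h) = 2 ^ h * 2 ^ h := by rw [two_mul, pow_add]
    simp only [Nat.mul_div_cancel_left h two_pos, hsq]
    calc j * (2 ^ h - 1) ≤ 2 ^ h * (2 ^ h - 1) := Nat.mul_le_mul_right _ hj
      _ < 2 ^ h * 2 ^ h - 1 := by
        zify [show 1 ≤ 2 ^ h by omega, show 1 ≤ 2 ^ h * 2 ^ h by nlinarith]
        nlinarith
  · have hj := hjo (odd_two_mul_add_one h)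
    rw [show (2 * h + 1 + 1) / 2 = h + 1 by omega, pow_succ, mul_comm] at hj
    have hsq : 2 ^ (2 * h + 1) = 2 * 2 ^ h * 2 ^ h := by rw [pow_succ, two_mul, pow_add]; ring
    simp only [show (2 * h + 1) / 2 = h by omega, hsq]
    calc j * (2 ^ h - 1) ≤ (2 * 2 ^ h - 1) * (2 ^ h - 1) := Nat.mul_le_mul_right _ hj
      _ < 2 * 2 ^ h * 2 ^ h - 1 := by
        have hP : 1 ≤ 2 ^ h := Nat.one_le_two_pow
        zify [hP, show 1 ≤ 2 * 2 ^ h by omega, show 1 ≤ 2 * 2 ^ h * 2 ^ h by nlinarith]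
        nlinarith

theorem stmt1_general (m a j : ℕ) (hm : 2 ≤ m) (hgcd : Nat.gcd a (2 ^ m - 1) = 1)
    (hj2 : 1 ≤ j)
    (hje : Even m → j ≤ 2 ^ (m / 2))
    (hjo : Odd m → j ≤ 2 ^ ((m + 1) / 2) - 1) :
    ell m (a * j % (2 ^ m - 1)) = m := by
  set n := 2 ^ m - 1
  have hgcd_b : n.gcd (a * j % n) = n.gcd j := by
    rw [Nat.gcd_comm, ← Nat.gcd_rec, Nat.gcd_comm, Nat.Coprime.gcd_mul_left_cancel j hgcd,
      Nat.gcd_comm]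
  rw [ell_eq_orderOf (by omega), hgcd_b]
  set d := n / n.gcd j
  have hωm : orderOf (2 : ZMod d) ∣ m :=
    orderOf_dvd_of_dvd_pow_sub_one two_pos (Nat.div_dvd_of_dvd (Nat.gcd_dvd_left n j))
  have hωpos : 0 < orderOf (2 : ZMod d) := Nat.pos_of_dvd_of_pos hωm (by omega)
  refine Nat.eq_of_dvd_of_lt_two_mul (by omega) hωm ?_ |>.symm
  by_contra! hsmall
  have hn_le : n ≤ j * (2 ^ (m / 2) - 1) :=
    calc n = n.gcd j * d := (Nat.mul_div_cancel' (Nat.gcd_dvd_left n j)).symm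
      _ ≤ j * (2 ^ orderOf (2 : ZMod d) - 1) :=
        Nat.mul_le_mul (Nat.le_of_dvd hj2 (Nat.gcd_dvd_right n j))
          (by exact_mod_cast le_pow_orderOf_sub_one le_rfl hωpos)
      _ ≤ j * (2 ^ (m / 2) - 1) := by gcongr <;> omega
  exact (mul_two_pow_half_sub_one_lt hm hje hjo).not_ge hn_le

theorem stmt1 (m a j : ℕ) (hm : 2 ≤ m) (hgcd : Nat.gcd a (2 ^ m - 1) = 1)
    (hj1 : j % 2 = 1) (hj2 : 1 ≤ j)
    (hje : Even m → j ≤ 2 ^ (m / 2))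
    (hjo : Odd m → j ≤ 2 ^ ((m + 1) / 2) - 1) :
    ell m (a * j % (2 ^ m - 1)) = m :=
  stmt1_general m a j hm hgcd hj2 hje hjo
end

section
/- Let m ≥ 2 and n = 2^m − 1. If m is odd, then T_{(1,m)} = N_{(0,m)} ∪ {0} and T_{(0,m)} = N_{(1,m)}. If m is even, then T_{(0,m)} = N_{(0,m)} ∪ {0} and T_{(1,m)} = N_{(1,m)}. -/
open Polynomial

lemma wt2_zero : wt2 0 = 0 := by simp [wt2]


/-!
Multiplication by `2` modulo `2 ^ m - 1` rotates the `m`-bit binary expansion of a residue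
cyclically, so along one full turn `i, 2 i, …, 2 ^ (m - 1) i` the residue is odd exactly `wt2 i`
times. The coset of `i` is the orbit of this rotation; its length `ell m i` divides `m`, and the
full turn runs through it `m / ell m i` times. Counting even residues therefore gives
`m * rho m i = ell m i * (m - wt2 i)`, i.e. `vv m i ≡ m - wt2 i (mod 2)`.
-/

open Function Finset

theorem Function.IsPeriodicPt.sum_range_mul_iterate {α M : Type*} [AddCommMonoid M] {f : α → α}
    {x : α} {p : ℕ} (hx : IsPeriodicPt f p x) (g : α → M) (q : ℕ) :
    ∑ j ∈ range (q * p), g (f^[j] x) = q • ∑ j ∈ range p, g (f^[j] x) := by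
  induction q with
  | zero => simp
  | succ q ih =>
    rw [Nat.succ_mul, sum_range_add, ih, succ_nsmul]
    congr 1
    refine sum_congr rfl fun j _ => ?_
    rw [add_comm, iterate_add_apply, (hx.const_mul q).eq]

theorem Function.IsPeriodicPt.sum_range_iterate_succ {α M : Type*} [AddCancelCommMonoid M]
    {f : α → α} {x : α} {p : ℕ} (hx : IsPeriodicPt f p x) (g : α → M) :
    ∑ j ∈ range p, g (f^[j + 1] x) = ∑ j ∈ range p, g (f^[j] x) := by
  have h := (sum_range_succ' (fun j => g (f^[j] x)) p).symm.trans
    (sum_range_succ (fun j => g (f^[j] x)) p)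
  rw [hx.eq, iterate_zero_apply] at h
  exact add_right_cancel h

theorem card_filter_mod_two_eq_zero_add_sum_mod_two {ι : Type*} (s : Finset ι) (f : ι → ℕ) :
    #{x ∈ s | f x % 2 = 0} + ∑ x ∈ s, f x % 2 = #s := by
  rw [card_filter, ← sum_add_distrib, card_eq_sum_ones]
  refine sum_congr rfl fun x _ => ?_
  rcases Nat.mod_two_eq_zero_or_one (f x) with h | h <;> simp [h]

theorem mul_two_pow_mod_two_pow_add_sub_one {k d i : ℕ} (hi : i < 2 ^ (k + d) - 1) :
    i * 2 ^ d % (2 ^ (k + d) - 1) = i % 2 ^ k * 2 ^ d + i / 2 ^ k := by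
  have hA : 0 < 2 ^ k := by positivity
  have hdecomp := Nat.div_add_mod i (2 ^ k)
  have hlow := Nat.mod_lt i hA
  rw [pow_add] at hi ⊢
  generalize 2 ^ k = A at *
  generalize 2 ^ d = D at *
  generalize i / A = b at *
  generalize i % A = a at *
  subst hdecomp
  have hAD : 1 ≤ A * D := by omega
  have hexp : (A * b + a) * D = (a * D + b) + b * (A * D - 1) := by
    zify [hAD]; ring
  rw [hexp, Nat.add_mul_mod_self_right, Nat.mod_eq_of_lt]
  suffices a * D + b + 1 < A * D by omega
  have hi' : A * b + a + 1 < A * D := by omega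
  rcases Nat.lt_or_ge (a + 1) A with ha | ha
  · have hb : b < D := by nlinarith
    have : (a + 2) * D ≤ A * D := Nat.mul_le_mul_right D ha
    nlinarith
  · obtain rfl : A = a + 1 := by omega
    have hb : b + 1 < D := by nlinarith
    nlinarith

theorem mul_two_pow_sub_mod_two_pow_sub_one_mod_two {m k i : ℕ} (hk : k < m)
    (hi : i < 2 ^ m - 1) : i * 2 ^ (m - k) % (2 ^ m - 1) % 2 = i / 2 ^ k % 2 := by
  obtain ⟨d, rfl⟩ := Nat.exists_eq_add_of_le hk.le
  have hd : d ≠ 0 := by omega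
  rw [Nat.add_sub_cancel_left, mul_two_pow_mod_two_pow_add_sub_one hi]
  simp [Nat.add_mod, Nat.mul_mod, Nat.pow_mod, hd]

theorem wt2_eq_sum_range {m i : ℕ} (hi : i < 2 ^ m) :
    wt2 i = ∑ k ∈ range m, i / 2 ^ k % 2 := by
  induction m generalizing i with
  | zero => simp_all [wt2]
  | succ m ih =>
    rcases Nat.eq_zero_or_pos i with rfl | hpos
    · simp [wt2]
    rw [wt2, Nat.digits_def' one_lt_two hpos, List.sum_cons, ← wt2, sum_range_succ',
      ih (by omega)]
    simp [pow_succ', Nat.div_div_eq_div_mul, add_comm]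

theorem wt2_le_s5 {m i : ℕ} (hi : i < 2 ^ m) : wt2 i ≤ m := by
  rw [wt2_eq_sum_range hi]
  simpa using
    sum_le_card_nsmul (range m) _ 1 fun k _ => Nat.le_of_lt_succ (Nat.mod_lt _ two_pos)

def doubleMod (n x : ℕ) : ℕ := 2 * x % n

theorem iterate_doubleMod_apply {n x : ℕ} (hx : x < n) (j : ℕ) :
    (doubleMod n)^[j] x = x * 2 ^ j % n := by
  induction j with
  | zero => simp [Nat.mod_eq_of_lt hx]
  | succ j ih => rw [iterate_succ_apply', ih, doubleMod, Nat.mul_mod_mod, pow_succ]; ring_nf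

theorem isPeriodicPt_doubleMod {m x : ℕ} (hx : x < 2 ^ m - 1) :
    IsPeriodicPt (doubleMod (2 ^ m - 1)) m x := by
  have h : 2 ^ m = (2 ^ m - 1) + 1 := (Nat.sub_add_cancel Nat.one_le_two_pow).symm
  generalize 2 ^ m - 1 = n at hx h
  rw [IsPeriodicPt, IsFixedPt, iterate_doubleMod_apply hx, h]
  simp [mul_add, Nat.mod_eq_of_lt hx]

theorem ell_eq_minimalPeriod {m i : ℕ} (hm : 0 < m) (hi : i < 2 ^ m - 1) :
    ell m i = minimalPeriod (doubleMod (2 ^ m - 1)) i := by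
  have hset : {l : ℕ | 0 < l ∧ i * 2 ^ l % (2 ^ m - 1) = i % (2 ^ m - 1)} =
      {l | 0 < l ∧ IsPeriodicPt (doubleMod (2 ^ m - 1)) l i} := by
    simp only [IsPeriodicPt, IsFixedPt, iterate_doubleMod_apply hi, Nat.mod_eq_of_lt hi]
  have hper := isPeriodicPt_doubleMod hi
  have hpos := hper.minimalPeriod_pos hm
  have hmem : sInf {l | 0 < l ∧ IsPeriodicPt (doubleMod (2 ^ m - 1)) l i} ∈
      {l | 0 < l ∧ IsPeriodicPt (doubleMod (2 ^ m - 1)) l i} := Nat.sInf_mem ⟨m, hm, hper⟩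
  rw [ell, hset]
  exact le_antisymm (Nat.sInf_le ⟨hpos, isPeriodicPt_minimalPeriod _ _⟩)
    (hmem.2.minimalPeriod_le hmem.1)

theorem sum_iterate_doubleMod_mod_two_eq_wt2 {m i : ℕ} (hi : i < 2 ^ m - 1) :
    ∑ j ∈ range m, (doubleMod (2 ^ m - 1))^[j] i % 2 = wt2 i := by
  rw [← (isPeriodicPt_doubleMod hi).sum_range_iterate_succ (· % 2),
    wt2_eq_sum_range (hi.trans_le (Nat.sub_le _ _)),
    ← sum_range_reflect (fun k => i / 2 ^ k % 2)]
  refine sum_congr rfl fun j hj => ?_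
  have hj : j < m := mem_range.1 hj
  rw [iterate_doubleMod_apply hi,
    ← mul_two_pow_sub_mod_two_pow_sub_one_mod_two (by omega : m - 1 - j < m) hi,
    show m - (m - 1 - j) = j + 1 by omega]

theorem coset_eq_image_iterate {m i : ℕ} (hm : 0 < m) (hi : i < 2 ^ m - 1) :
    coset m i = (range (minimalPeriod (doubleMod (2 ^ m - 1)) i)).image
      ((doubleMod (2 ^ m - 1))^[·] i) := by
  rw [coset, ell_eq_minimalPeriod hm hi]
  exact image_congr fun j _ => (iterate_doubleMod_apply hi j).symm

theorem rho_eq_card_filter {m i : ℕ} (hm : 0 < m) (hi : i < 2 ^ m - 1) :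
    rho m i = #{j ∈ range (minimalPeriod (doubleMod (2 ^ m - 1)) i) |
      (doubleMod (2 ^ m - 1))^[j] i % 2 = 0} := by
  rw [rho, coset_eq_image_iterate hm hi, filter_image, card_image_of_injOn]
  refine iterate_injOn_Iio_minimalPeriod.mono ?_
  rw [← coe_range]
  exact coe_subset.2 (filter_subset _ _)

theorem mul_rho_eq_ell_mul_sub_wt2 {m i : ℕ} (hm : 0 < m) (hi : i < 2 ^ m - 1) :
    m * rho m i = ell m i * (m - wt2 i) := by
  have hper := isPeriodicPt_doubleMod hi
  rw [ell_eq_minimalPeriod hm hi, rho_eq_card_filter hm hi,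
    ← sum_iterate_doubleMod_mod_two_eq_wt2 hi]
  generalize doubleMod (2 ^ m - 1) = g at hper ⊢
  obtain ⟨q, rfl⟩ := hper.minimalPeriod_dvd
  have hsplit := card_filter_mod_two_eq_zero_add_sum_mod_two (range (minimalPeriod g i)) (g^[·] i)
  rw [mul_comm _ q, (isPeriodicPt_minimalPeriod g i).sum_range_mul_iterate (· % 2), smul_eq_mul]
  rw [card_range] at hsplit
  generalize #{j ∈ range (minimalPeriod g i) | g^[j] i % 2 = 0} = R at hsplit ⊢
  generalize ∑ j ∈ range (minimalPeriod g i), g^[j] i % 2 = S at hsplit ⊢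
  rw [← hsplit, mul_add q, Nat.add_sub_cancel]
  ring

theorem vv_eq_sub_wt2_mod_two {m i : ℕ} (hm : 0 < m) (hi : i < 2 ^ m - 1) :
    vv m i = (m - wt2 i) % 2 := by
  have hpos : 0 < ell m i := by
    rw [ell_eq_minimalPeriod hm hi]
    exact (isPeriodicPt_doubleMod hi).minimalPeriod_pos hm
  rw [vv, mul_rho_eq_ell_mul_sub_wt2 hm hi, Nat.mul_div_cancel_left _ hpos]

theorem mem_Tset {m i j : ℕ} (hm : 0 < m) :
    i ∈ Tset m j ↔ i < 2 ^ m - 1 ∧ (m - wt2 i) % 2 = j := by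
  rw [Tset, mem_filter, mem_range]
  exact and_congr_right fun hi => by rw [vv_eq_sub_wt2_mod_two hm hi]

theorem Tset_eq_Nset_zero_union {m j : ℕ} (hm : 0 < m) (hj : m % 2 = j) :
    Tset m j = Nset m 0 ∪ {0} := by
  have hn : 0 < 2 ^ m - 1 := Nat.sub_pos_of_lt (Nat.one_lt_two_pow hm.ne')
  ext i
  have hle : i < 2 ^ m - 1 → wt2 i ≤ m := fun hi => wt2_le_s5 (by omega)
  have hzero : i = 0 → wt2 i = 0 := by rintro rfl; simp [wt2]
  rw [mem_Tset hm, Nset, mem_union, mem_filter, mem_singleton, mem_range]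
  omega

theorem Tset_eq_Nset_one {m j : ℕ} (hm : 0 < m) (hj : (m + 1) % 2 = j) :
    Tset m j = Nset m 1 := by
  ext i
  have hle : i < 2 ^ m - 1 → wt2 i ≤ m := fun hi => wt2_le_s5 (by omega)
  have hzero : i = 0 → wt2 i = 0 := by rintro rfl; simp [wt2]
  rw [mem_Tset hm, Nset, mem_filter, mem_range]
  omega

theorem stmt5 (m : ℕ) (hm : 2 ≤ m) :
    (Odd m → Tset m 1 = Nset m 0 ∪ {0} ∧ Tset m 0 = Nset m 1) ∧
    (Even m → Tset m 0 = Nset m 0 ∪ {0} ∧ Tset m 1 = Nset m 1) := by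
  have hm₀ : 0 < m := by omega
  refine ⟨fun hodd => ?_, fun heven => ?_⟩
  · have h := Nat.odd_iff.mp hodd
    exact ⟨Tset_eq_Nset_zero_union hm₀ h, Tset_eq_Nset_one hm₀ (by omega)⟩
  · have h := Nat.even_iff.mp heven
    exact ⟨Tset_eq_Nset_zero_union hm₀ h, Tset_eq_Nset_one hm₀ (by omega)⟩
end
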